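/- Let 0 < d < 1, k ≥ 1, t ≥ 0, and c ∈ (0,1). Suppose κ ∈ (0,1) has density proportional to κ^{d+k/2−1}(1−κ+κc)^{−d−1} exp(−κt/2). Then for c sufficiently small (depending only on d, k), E[1−κ] ≤ K c^{d} e^{t/2} for a constant K depending only on d and k. -/

import Mathlib

/-!
Bounding `e^{-κt/2}` above by `1` and `(1 - κ + κc)^{-d-1}` above by `(1 - κ)^{-d-1}`, the
numerator is at most the Beta integral `∫₀¹ κ^a (1-κ)^{-d}`, finite because `d < 1`.
For the denominator, on the interval `(1 - c, 1)` of length `c` we have `1 - κ + κc ≤ 2c`, and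
`e^{-κt/2} ≥ e^{-t/2}`, so it is at least a constant times `c^{-d} e^{-t/2}`.
-/

open MeasureTheory Set

theorem integrableOn_rpow_mul_one_sub_rpow {a b : ℝ} (ha : -1 < a) (hb : -1 < b) :
    IntegrableOn (fun x : ℝ => x ^ a * (1 - x) ^ b) (Ioo 0 1) := by
  have hβ := (Complex.betaIntegral_convergent (u := a + 1) (v := b + 1)
    (by simp; linarith) (by simp; linarith)).norm
  rw [intervalIntegrable_iff_integrableOn_Ioo_of_le zero_le_one] at hβ
  refine hβ.congr_fun (fun x hx => ?_) measurableSet_Ioo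
  have h1x : (1 : ℂ) - x = ((1 - x : ℝ) : ℂ) := by push_cast; ring
  simp only [norm_mul, h1x, Complex.norm_cpow_eq_rpow_re_of_pos hx.1,
    Complex.norm_cpow_eq_rpow_re_of_pos (sub_pos.2 hx.2)]
  simp

theorem min_rpow_le_rpow_of_mem_Icc {x y z : ℝ} (a : ℝ) (hx : 0 < x) (hz : z ∈ Icc x y) :
    min (x ^ a) (y ^ a) ≤ z ^ a := by
  rcases le_total 0 a with ha | ha
  · exact (min_le_left _ _).trans (Real.rpow_le_rpow hx.le hz.1 ha)
  · exact (min_le_right _ _).trans (Real.rpow_le_rpow_of_nonpos (hx.trans_le hz.1) hz.2 ha)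

theorem one_sub_add_mul_pos {κ c : ℝ} (hκ : κ ∈ Ioo 0 1) (hc : 0 ≤ c) :
    0 < 1 - κ + κ * c := by
  nlinarith [hκ.1, hκ.2]

theorem exp_neg_mul_div_two_le_one {κ t : ℝ} (hκ : 0 ≤ κ) (ht : 0 ≤ t) :
    Real.exp (-κ * t / 2) ≤ 1 :=
  Real.exp_le_one_iff.2 (by nlinarith)

/-- The unnormalised posterior density of `κ`; the paper's exponent is `a = d + k/2 - 1`. -/
noncomputable def eigDensity (a d c t κ : ℝ) : ℝ :=
  κ ^ a * (1 - κ + κ * c) ^ (-d - 1) * Real.exp (-κ * t / 2)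

namespace eigDensity

variable {a d c t κ : ℝ}

theorem measurable : Measurable (eigDensity a d c t) := by
  unfold eigDensity; fun_prop

theorem nonneg (hκ : κ ∈ Ioo 0 1) (hc : 0 ≤ c) : 0 ≤ eigDensity a d c t κ := by
  have := Real.rpow_nonneg hκ.1.le a
  have := Real.rpow_nonneg (one_sub_add_mul_pos hκ hc).le (-d - 1)
  unfold eigDensity; positivity

theorem one_sub_mul_le (hd : -1 ≤ d) (hc : 0 ≤ c) (ht : 0 ≤ t) (hκ : κ ∈ Ioo 0 1) :
    (1 - κ) * eigDensity a d c t κ ≤ κ ^ a * (1 - κ) ^ (-d) := by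
  have h1κ : 0 < 1 - κ := sub_pos.2 hκ.2
  have hbase : (1 - κ + κ * c) ^ (-d - 1) ≤ (1 - κ) ^ (-d - 1) :=
    Real.rpow_le_rpow_of_nonpos h1κ (by nlinarith [hκ.1]) (by linarith)
  have hexp := exp_neg_mul_div_two_le_one hκ.1.le ht
  have := Real.rpow_nonneg hκ.1.le a
  have := Real.rpow_nonneg (one_sub_add_mul_pos hκ hc).le (-d - 1)
  calc (1 - κ) * eigDensity a d c t κ ≤ (1 - κ) * (κ ^ a * (1 - κ) ^ (-d - 1) * 1) := by
        unfold eigDensity; gcongr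
    _ = κ ^ a * (1 - κ) ^ (-d) := by
        rw [Real.rpow_sub_one h1κ.ne']; field_simp

theorem le_rpow (hd : -1 ≤ d) (hc : 0 < c) (hc1 : c ≤ 1) (ht : 0 ≤ t) (hκ : κ ∈ Ioo 0 1) :
    eigDensity a d c t κ ≤ c ^ (-d - 1) * κ ^ a := by
  have hbase : (1 - κ + κ * c) ^ (-d - 1) ≤ c ^ (-d - 1) :=
    Real.rpow_le_rpow_of_nonpos hc (by nlinarith [hκ.1, hκ.2]) (by linarith)
  have hexp := exp_neg_mul_div_two_le_one hκ.1.le ht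
  have := Real.rpow_nonneg hκ.1.le a
  calc eigDensity a d c t κ ≤ κ ^ a * c ^ (-d - 1) * 1 := by unfold eigDensity; gcongr
    _ = c ^ (-d - 1) * κ ^ a := by ring

theorem integrableOn (ha : -1 < a) (hd : -1 ≤ d) (hc : 0 < c) (hc1 : c ≤ 1) (ht : 0 ≤ t) :
    IntegrableOn (eigDensity a d c t) (Ioo 0 1) := by
  refine Integrable.mono' (((intervalIntegral.integrableOn_Ioo_rpow_iff one_pos).2 ha).const_mul
    (c ^ (-d - 1))) measurable.aestronglyMeasurable ?_
  refine (ae_restrict_iff' measurableSet_Ioo).2 (.of_forall fun κ hκ => ?_)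
  rw [Real.norm_of_nonneg (nonneg hκ hc.le)]
  exact le_rpow hd hc hc1 ht hκ

theorem le_of_mem_Ioo_one_sub (hd : -1 ≤ d) (hc : 0 < c) (hc2 : c ≤ 1 / 2) (ht : 0 ≤ t)
    (hκ : κ ∈ Ioo (1 - c) 1) :
    min ((1 / 2) ^ a) 1 * (2 * c) ^ (-d - 1) * Real.exp (-t / 2) ≤ eigDensity a d c t κ := by
  have hκ' : κ ∈ Ioo 0 1 := ⟨by linarith [hκ.1], hκ.2⟩
  have hpow : min ((1 / 2) ^ a) 1 ≤ κ ^ a := by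
    simpa using min_rpow_le_rpow_of_mem_Icc (y := 1) a (by norm_num)
      ⟨by linarith [hκ.1], hκ.2.le⟩
  have hbase : (2 * c) ^ (-d - 1) ≤ (1 - κ + κ * c) ^ (-d - 1) :=
    Real.rpow_le_rpow_of_nonpos (one_sub_add_mul_pos hκ' hc.le)
      (by nlinarith [hκ.1, hκ.2]) (by linarith)
  have hexp : Real.exp (-t / 2) ≤ Real.exp (-κ * t / 2) :=
    Real.exp_le_exp.2 (by nlinarith [hκ.2])
  unfold eigDensity
  have := Real.rpow_nonneg hκ'.1.le a
  have := Real.rpow_nonneg (one_sub_add_mul_pos hκ' hc.le).le (-d - 1)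
  gcongr

theorem setIntegral_le (hd : -1 ≤ d) (hd1 : d < 1) (ha : -1 < a) (hc : 0 ≤ c) (ht : 0 ≤ t) :
    ∫ κ in Ioo 0 1, (1 - κ) * eigDensity a d c t κ ≤ ∫ κ in Ioo 0 1, κ ^ a * (1 - κ) ^ (-d) := by
  refine integral_mono_of_nonneg ?_ (integrableOn_rpow_mul_one_sub_rpow ha (by linarith)) ?_
  · exact (ae_restrict_iff' measurableSet_Ioo).2
      (.of_forall fun κ hκ => mul_nonneg (sub_pos.2 hκ.2).le (nonneg hκ hc))
  · exact (ae_restrict_iff' measurableSet_Ioo).2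
      (.of_forall fun κ hκ => one_sub_mul_le hd hc ht hκ)

theorem le_setIntegral (ha : -1 < a) (hd : -1 ≤ d) (hc : 0 < c) (hc2 : c ≤ 1 / 2) (ht : 0 ≤ t) :
    min ((1 / 2) ^ a) 1 * 2 ^ (-d - 1) * c ^ (-d) * Real.exp (-t / 2) ≤
      ∫ κ in Ioo 0 1, eigDensity a d c t κ := by
  have hint := integrableOn ha hd hc (by linarith) ht
  have hsub : Ioo (1 - c) 1 ⊆ Ioo 0 1 := Ioo_subset_Ioo (by linarith) le_rfl
  have hvol : volume.real (Ioo (1 - c) 1) = c := by simp [hc.le]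
  calc min ((1 / 2) ^ a) 1 * 2 ^ (-d - 1) * c ^ (-d) * Real.exp (-t / 2)
      = min ((1 / 2) ^ a) 1 * (2 * c) ^ (-d - 1) * Real.exp (-t / 2) *
          volume.real (Ioo (1 - c) 1) := by
        rw [hvol, Real.mul_rpow zero_le_two hc.le, Real.rpow_sub_one hc.ne']
        field_simp
    _ ≤ ∫ κ in Ioo (1 - c) 1, eigDensity a d c t κ :=
        setIntegral_ge_of_const_le_real measurableSet_Ioo measure_Ioo_lt_top.ne
          (fun κ hκ => le_of_mem_Ioo_one_sub hd hc hc2 ht hκ) (hint.mono_set hsub)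
    _ ≤ ∫ κ in Ioo 0 1, eigDensity a d c t κ :=
        setIntegral_mono_set hint
          ((ae_restrict_iff' measurableSet_Ioo).2 (.of_forall fun κ hκ => nonneg hκ hc.le))
          (.of_forall hsub)

end eigDensity

/-- Lemma 4: under the Exponential-Inverse-Gamma posterior (unnormalized density
`κ^{d+k/2-1}(1-κ+κc)^{-d-1} e^{-κt/2}` on `(0,1)`), for `c` small enough
`E[1-κ] ≤ K c^d e^{t/2}` with `K` depending only on `d` and `k`. -/
theorem EIG_posterior_one_sub_kappa_bound
    (d : ℝ) (k : ℕ) (hd0 : 0 < d) (hd1 : d < 1) (hk : 1 ≤ k) :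
    ∃ K : ℝ, 0 < K ∧ ∃ c₀ ∈ Ioo (0:ℝ) 1, ∀ c : ℝ, 0 < c → c ≤ c₀ → ∀ t : ℝ, 0 ≤ t →
      (∫ κ in Ioo (0:ℝ) 1,
          (1 - κ) * (κ ^ (d + (k : ℝ) / 2 - 1) * (1 - κ + κ * c) ^ (-d - 1) *
            Real.exp (-κ * t / 2))) /
        (∫ κ in Ioo (0:ℝ) 1,
          κ ^ (d + (k : ℝ) / 2 - 1) * (1 - κ + κ * c) ^ (-d - 1) *
            Real.exp (-κ * t / 2))
      ≤ K * c ^ d * Real.exp (t / 2) := by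
  have ha : -1 < d + (k : ℝ) / 2 - 1 := by
    have : (1 : ℝ) ≤ k := by exact_mod_cast hk
    linarith
  set a := d + (k : ℝ) / 2 - 1
  set B := ∫ κ in Ioo (0 : ℝ) 1, κ ^ a * (1 - κ) ^ (-d)
  set X := min ((1 / 2) ^ a) 1 * (2 : ℝ) ^ (-d - 1)
  have hB : 0 ≤ B := setIntegral_nonneg measurableSet_Ioo fun κ hκ =>
    mul_nonneg (Real.rpow_nonneg hκ.1.le a) (Real.rpow_nonneg (sub_pos.2 hκ.2).le _)
  refine ⟨B / X + 1, by positivity, 1 / 2, by norm_num, fun c hc hc2 t ht => ?_⟩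
  calc (∫ κ in Ioo 0 1, (1 - κ) * eigDensity a d c t κ) / ∫ κ in Ioo 0 1, eigDensity a d c t κ
      ≤ B / (X * c ^ (-d) * Real.exp (-t / 2)) :=
        div_le_div₀ hB (eigDensity.setIntegral_le (by linarith) hd1 ha hc.le ht) (by positivity)
          (eigDensity.le_setIntegral ha (by linarith) hc hc2 ht)
    _ = B / X * c ^ d * Real.exp (t / 2) := by
        rw [Real.rpow_neg hc.le, neg_div, Real.exp_neg]; field_simp
    _ ≤ (B / X + 1) * c ^ d * Real.exp (t / 2) := by gcongr; linarith
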